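/- arXiv:0801.3099 — 6 statements merged into one kernel-verified Lean document; each statement's English description precedes it below -/
import Mathlib

section
/- Let B be an n×n Hermitian positive definite complex matrix, γ ∈ (0,1), and T an n×n Hermitian matrix with ‖I − T‖ ≤ γ (operator norm). Let x ≠ 0 and let x' be defined by μ(x)·x' = Bx − (I − T)(Bx − μ(x)x). Then ‖μ(x)x' − Bx‖ ≤ γ‖Bx − μ(x)x‖, the vector x' is nonzero, and sin∠{x', Bx} ≤ γ‖Bx − μ(x)x‖/‖Bx‖ < 1; that is, x' lies in the circular cone around Bx with opening angle φ_γ(x) = arcsin(γ‖Bx − μ(x)x‖/‖Bx‖). -/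
/-!
The residual `r = Bx - μ(x)x` satisfies `re (x, r) = 0`, so Pythagoras gives
`‖Bx‖² = ‖r‖² + μ(x)²‖x‖²`, and `μ(x) > 0` makes `‖r‖ < ‖Bx‖`. The defining equation of `x'`
says `μ(x)x' - Bx = -(I - T)r`, which has norm at most `γ‖r‖ < ‖Bx‖`. Finally, for any `y`,
`sin ∠{y, b} ≤ ‖y - b‖ / ‖b‖`, since `‖b‖ sin ∠{y, b}` is the distance from `b` to the line
through `y`; apply this to `y = μ(x)x'`, which spans the same line as `x'`.
-/

open scoped ComplexOrder

noncomputable section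

/-- Matrix-vector multiplication viewed as a map on `EuclideanSpace`. -/
def mulVecE {n : ℕ} (M : Matrix (Fin n) (Fin n) ℂ) (x : EuclideanSpace ℂ (Fin n)) :
    EuclideanSpace ℂ (Fin n) :=
  (WithLp.equiv 2 (Fin n → ℂ)).symm (M.mulVec (WithLp.equiv 2 (Fin n → ℂ) x))

/-- The Rayleigh quotient `μ(x) = (x,Bx)/(x,x)`. -/
def RQ {n : ℕ} (B : Matrix (Fin n) (Fin n) ℂ) (x : EuclideanSpace ℂ (Fin n)) : ℝ :=
  (inner ℂ x (mulVecE B x) : ℂ).re / ‖x‖ ^ 2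

/-- The angle in `[0, π/2]` between two vectors, defined by
`cos ∠{x,y} = |(x,y)| / (‖x‖‖y‖)`. -/
def ang {n : ℕ} (x y : EuclideanSpace ℂ (Fin n)) : ℝ :=
  Real.arccos (‖(inner ℂ x y : ℂ)‖ / (‖x‖ * ‖y‖))

/-- The opening angle `φ_γ(x) = arcsin(γ ‖Bx - μ(x)x‖ / ‖Bx‖)`. -/
def oangle {n : ℕ} (B : Matrix (Fin n) (Fin n) ℂ) (γ : ℝ)
    (x : EuclideanSpace ℂ (Fin n)) : ℝ :=
  Real.arcsin (γ * ‖mulVecE B x - ((RQ B x : ℝ) : ℂ) • x‖ / ‖mulVecE B x‖)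

section RCLike

variable {𝕜 E : Type*} [RCLike 𝕜] [NormedAddCommGroup E] [InnerProductSpace 𝕜 E]

lemma sq_norm_mul_sq_norm_sub_sq_norm_inner_le (y b : E) :
    ‖y‖ ^ 2 * ‖b‖ ^ 2 - ‖(inner 𝕜 y b : 𝕜)‖ ^ 2 ≤ ‖y‖ ^ 2 * ‖y - b‖ ^ 2 := by
  have hre : RCLike.re (inner 𝕜 y b : 𝕜) ^ 2 ≤ ‖(inner 𝕜 y b : 𝕜)‖ ^ 2 := by
    rw [← sq_abs]
    exact pow_le_pow_left₀ (abs_nonneg _) (RCLike.abs_re_le_norm _) 2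
  -- the difference of the two sides is at least `(‖y‖² - re ⟪y, b⟫)²`
  nlinarith [norm_sub_sq (𝕜 := 𝕜) y b, sq_nonneg (RCLike.re (inner 𝕜 y b : 𝕜) - ‖y‖ ^ 2)]

lemma norm_sub_smul_lt_norm_of_re_inner_eq {x b : E} {μ : ℝ} (hμ : μ ≠ 0) (hx : x ≠ 0)
    (h : RCLike.re (inner 𝕜 x b : 𝕜) = μ * ‖x‖ ^ 2) :
    ‖b - ((μ : ℝ) : 𝕜) • x‖ < ‖b‖ := by
  have horth : RCLike.re (inner 𝕜 (b - ((μ : ℝ) : 𝕜) • x) (((μ : ℝ) : 𝕜) • x)) = 0 := by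
    rw [inner_sub_left, map_sub, inner_smul_real_right, inner_smul_real_right,
      inner_smul_real_left, RCLike.smul_re, RCLike.smul_re, RCLike.smul_re, inner_re_symm, h,
      inner_self_eq_norm_sq]
    ring
  have hpyth := norm_add_sq (𝕜 := 𝕜) (b - ((μ : ℝ) : 𝕜) • x) (((μ : ℝ) : 𝕜) • x)
  rw [sub_add_cancel, horth, norm_smul] at hpyth
  have hμx : 0 < ‖((μ : ℝ) : 𝕜)‖ * ‖x‖ := by simp [hμ, hx]
  nlinarith [norm_nonneg b, norm_nonneg (b - ((μ : ℝ) : 𝕜) • x)]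

end RCLike

section Euclidean

variable {n : ℕ}

lemma re_inner_mulVecE_pos {B : Matrix (Fin n) (Fin n) ℂ} (hB : B.PosDef)
    {x : EuclideanSpace ℂ (Fin n)} (hx : x ≠ 0) : 0 < (inner ℂ x (mulVecE B x) : ℂ).re := by
  have hx' : WithLp.equiv 2 (Fin n → ℂ) x ≠ 0 := by simpa using hx
  simpa [EuclideanSpace.inner_eq_star_dotProduct, mulVecE, dotProduct_comm]
    using hB.re_dotProduct_pos hx'

lemma re_inner_mulVecE_eq_RQ_mul (B : Matrix (Fin n) (Fin n) ℂ)
    {x : EuclideanSpace ℂ (Fin n)} (hx : x ≠ 0) :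
    (inner ℂ x (mulVecE B x) : ℂ).re = RQ B x * ‖x‖ ^ 2 := by
  rw [RQ, div_mul_cancel₀ _ (by simpa using hx)]

lemma RQ_pos {B : Matrix (Fin n) (Fin n) ℂ} (hB : B.PosDef)
    {x : EuclideanSpace ℂ (Fin n)} (hx : x ≠ 0) : 0 < RQ B x :=
  div_pos (re_inner_mulVecE_pos hB hx) (by positivity)

lemma norm_residual_lt_norm_mulVecE {B : Matrix (Fin n) (Fin n) ℂ} (hB : B.PosDef)
    {x : EuclideanSpace ℂ (Fin n)} (hx : x ≠ 0) :
    ‖mulVecE B x - ((RQ B x : ℝ) : ℂ) • x‖ < ‖mulVecE B x‖ :=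
  norm_sub_smul_lt_norm_of_re_inner_eq (RQ_pos hB hx).ne' hx
    (re_inner_mulVecE_eq_RQ_mul B hx)

lemma ang_smul_left {c : ℂ} (hc : c ≠ 0) (x y : EuclideanSpace ℂ (Fin n)) :
    ang (c • x) y = ang x y := by
  have hc' : 0 < ‖c‖ := norm_pos_iff.mpr hc
  rw [ang, ang, inner_smul_left, norm_mul, RCLike.norm_conj, norm_smul, mul_assoc,
    mul_div_mul_left _ _ hc'.ne']

lemma sin_ang_le_norm_sub_div (y : EuclideanSpace ℂ (Fin n)) {b : EuclideanSpace ℂ (Fin n)}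
    (hb : b ≠ 0) : Real.sin (ang y b) ≤ ‖y - b‖ / ‖b‖ := by
  rcases eq_or_ne y 0 with rfl | hy
  · -- `ang 0 b = arccos (0 / 0) = π / 2`
    simp [ang, hb]
  have hy' : 0 < ‖y‖ := norm_pos_iff.mpr hy
  have hb' : 0 < ‖b‖ := norm_pos_iff.mpr hb
  rw [ang, Real.sin_arccos, Real.sqrt_le_iff]
  refine ⟨by positivity, ?_⟩
  rw [div_pow, div_pow, mul_pow, one_sub_div (by positivity),
    div_le_div_iff₀ (by positivity) (by positivity)]
  nlinarith [sq_norm_mul_sq_norm_sub_sq_norm_inner_le (𝕜 := ℂ) y b]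

lemma ang_le_arcsin_of_sin_le {x y : EuclideanSpace ℂ (Fin n)} {s : ℝ}
    (h : Real.sin (ang x y) ≤ s) : ang x y ≤ Real.arcsin s := by
  have hnonneg : 0 ≤ ang x y := Real.arccos_nonneg _
  have hle : ang x y ≤ Real.pi / 2 := Real.arccos_le_pi_div_two.mpr (by positivity)
  calc ang x y = Real.arcsin (Real.sin (ang x y)) := (Real.arcsin_sin (by linarith) hle).symm
    _ ≤ Real.arcsin s := Real.monotone_arcsin h

end Euclidean

theorem iterate_in_cone_general
    {n : ℕ} (B T : Matrix (Fin n) (Fin n) ℂ)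
    (hB : B.PosDef)
    (γ : ℝ) (hγ1 : γ < 1)
    (hTnorm : ∀ z : EuclideanSpace ℂ (Fin n), ‖mulVecE (1 - T) z‖ ≤ γ * ‖z‖)
    (x : EuclideanSpace ℂ (Fin n)) (hx : x ≠ 0)
    (x' : EuclideanSpace ℂ (Fin n))
    (hx' : ((RQ B x : ℝ) : ℂ) • x' =
      mulVecE B x - mulVecE (1 - T) (mulVecE B x - ((RQ B x : ℝ) : ℂ) • x)) :
    ‖((RQ B x : ℝ) : ℂ) • x' - mulVecE B x‖ ≤
        γ * ‖mulVecE B x - ((RQ B x : ℝ) : ℂ) • x‖ ∧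
    x' ≠ 0 ∧
    Real.sin (ang x' (mulVecE B x)) ≤
        γ * ‖mulVecE B x - ((RQ B x : ℝ) : ℂ) • x‖ / ‖mulVecE B x‖ ∧
    γ * ‖mulVecE B x - ((RQ B x : ℝ) : ℂ) • x‖ / ‖mulVecE B x‖ < 1 ∧
    ang x' (mulVecE B x) ≤ oangle B γ x := by
  set μ : ℂ := ((RQ B x : ℝ) : ℂ)
  set b := mulVecE B x
  set r := b - μ • x
  have hμ : μ ≠ 0 := Complex.ofReal_ne_zero.mpr (RQ_pos hB hx).ne'
  have hstep : ‖μ • x' - b‖ ≤ γ * ‖r‖ := by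
    rw [hx', sub_sub_cancel_left, norm_neg]
    exact hTnorm r
  have hr : ‖r‖ < ‖b‖ := norm_residual_lt_norm_mulVecE hB hx
  have hδ : γ * ‖r‖ < ‖b‖ := (mul_le_of_le_one_left (norm_nonneg r) hγ1.le).trans_lt hr
  have hb : 0 < ‖b‖ := (norm_nonneg r).trans_lt hr
  have hsin : Real.sin (ang x' b) ≤ γ * ‖r‖ / ‖b‖ :=
    calc Real.sin (ang x' b) = Real.sin (ang (μ • x') b) := by rw [ang_smul_left hμ]
      _ ≤ ‖μ • x' - b‖ / ‖b‖ := sin_ang_le_norm_sub_div _ (norm_pos_iff.mp hb)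
      _ ≤ γ * ‖r‖ / ‖b‖ := by gcongr
  refine ⟨hstep, ?_, hsin, (div_lt_one hb).mpr hδ, ang_le_arcsin_of_sin_le hsin⟩
  rintro rfl
  rw [smul_zero, zero_sub, norm_neg] at hstep
  exact hδ.not_ge hstep

/-- The preconditioned iterate `x'` lies in the circular cone around `Bx` with
opening angle `φ_γ(x)`. -/
theorem iterate_in_cone
    {n : ℕ} (B T : Matrix (Fin n) (Fin n) ℂ)
    (hB : B.PosDef) (hT : T.IsHermitian)
    (γ : ℝ) (hγ0 : 0 < γ) (hγ1 : γ < 1)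
    (hTnorm : ∀ z : EuclideanSpace ℂ (Fin n), ‖mulVecE (1 - T) z‖ ≤ γ * ‖z‖)
    (x : EuclideanSpace ℂ (Fin n)) (hx : x ≠ 0)
    (x' : EuclideanSpace ℂ (Fin n))
    (hx' : ((RQ B x : ℝ) : ℂ) • x' =
      mulVecE B x - mulVecE (1 - T) (mulVecE B x - ((RQ B x : ℝ) : ℂ) • x)) :
    ‖((RQ B x : ℝ) : ℂ) • x' - mulVecE B x‖ ≤
        γ * ‖mulVecE B x - ((RQ B x : ℝ) : ℂ) • x‖ ∧
    x' ≠ 0 ∧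
    Real.sin (ang x' (mulVecE B x)) ≤
        γ * ‖mulVecE B x - ((RQ B x : ℝ) : ℂ) • x‖ / ‖mulVecE B x‖ ∧
    γ * ‖mulVecE B x - ((RQ B x : ℝ) : ℂ) • x‖ / ‖mulVecE B x‖ < 1 ∧
    ang x' (mulVecE B x) ≤ oangle B γ x :=
  iterate_in_cone_general B T hB γ hγ1 hTnorm x hx x' hx'
end
end

section
/- Let B be an n×n Hermitian positive definite complex matrix and let x, w be nonzero vectors. If cos∠{w, Bx} > cos∠{x, Bx} (i.e., the angle between w and Bx is strictly smaller than the angle between x and Bx), then μ(w) > μ(x). -/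
/-!
Cauchy–Schwarz for the semi-inner product `(x, y) ↦ (x, By)` gives
`|(w, Bx)|² ≤ (x, Bx) (w, Bw)`. Cancelling `‖Bx‖` in the hypothesis and using
`(x, Bx) ≤ |(x, Bx)|` yields `(x, Bx) ‖w‖ < |(w, Bx)| ‖x‖`; squaring and combining,
`(x, Bx)² ‖w‖² < (x, Bx) (w, Bw) ‖x‖²`, and dividing by `(x, Bx) ‖x‖² ‖w‖²` gives `μ(x) < μ(w)`.
-/

open scoped ComplexOrder

noncomputable section

namespace LinearMap.IsPositive

open RCLike

variable {𝕜 E : Type*} [RCLike 𝕜] [NormedAddCommGroup E] [InnerProductSpace 𝕜 E]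
  {T : E →ₗ[𝕜] E}

abbrev preInnerProductSpaceCore (hT : T.IsPositive) : PreInnerProductSpace.Core 𝕜 E where
  inner x y := inner 𝕜 x (T y)
  conj_inner_symm x y := by rw [inner_conj_symm, hT.isSymmetric]
  re_inner_nonneg := hT.re_inner_nonneg_right
  add_left x y z := inner_add_left x y (T z)
  smul_left x y r := inner_smul_left x (T y) r

theorem norm_inner_sq_le (hT : T.IsPositive) (x y : E) :
    ‖inner 𝕜 x (T y)‖ ^ 2 ≤ re (inner 𝕜 x (T x)) * re (inner 𝕜 y (T y)) := by
  have h := InnerProductSpace.Core.inner_mul_inner_self_le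
    (c := hT.preInnerProductSpaceCore) x y
  change ‖inner 𝕜 x (T y)‖ * ‖inner 𝕜 y (T x)‖
    ≤ re (inner 𝕜 x (T x)) * re (inner 𝕜 y (T y)) at h
  have hsymm : ‖inner 𝕜 y (T x)‖ = ‖inner 𝕜 x (T y)‖ := by
    rw [← hT.isSymmetric, ← inner_conj_symm, norm_conj]
  rwa [hsymm, ← sq] at h

theorem re_inner_div_norm_sq_lt (hT : T.IsPositive) {x w : E}
    (h : re (inner 𝕜 x (T x)) / ‖x‖ < ‖inner 𝕜 w (T x)‖ / ‖w‖) :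
    re (inner 𝕜 x (T x)) / ‖x‖ ^ 2 < re (inner 𝕜 w (T w)) / ‖w‖ ^ 2 := by
  have hw : 0 < ‖w‖ := by
    by_contra! hw
    rw [norm_le_zero_iff.mp hw, norm_zero, div_zero] at h
    exact h.not_ge (div_nonneg (hT.re_inner_nonneg_right x) (norm_nonneg x))
  have hx : 0 < ‖x‖ := by
    by_contra! hx
    obtain rfl := norm_le_zero_iff.mp hx
    simp at h
  set a := re (inner 𝕜 x (T x))
  set t := ‖inner 𝕜 w (T x)‖
  have ha : 0 ≤ a := hT.re_inner_nonneg_right x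
  have hcross : a * ‖w‖ < t * ‖x‖ := by rwa [div_lt_div_iff₀ hx hw] at h
  have hsq : (a * ‖w‖) ^ 2 < (t * ‖x‖) ^ 2 := by gcongr
  have hcs : t ^ 2 ≤ re (inner 𝕜 w (T w)) * a := hT.norm_inner_sq_le w x
  -- `a > 0`, as `a = 0` would make `hsq` read `0 < t ^ 2 * ‖x‖ ^ 2 ≤ 0`
  have ha' : 0 < a := ha.lt_of_ne fun h0 ↦ by
    rw [← h0] at hsq hcs
    nlinarith [mul_nonneg (sq_nonneg ‖x‖) (sq_nonneg t)]
  rw [div_lt_div_iff₀ (by positivity) (by positivity)]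
  nlinarith [mul_le_mul_of_nonneg_right hcs (sq_nonneg ‖x‖)]

theorem re_inner_div_norm_sq_lt_of_cos_lt (hT : T.IsPositive) {x w : E}
    (h : ‖inner 𝕜 x (T x)‖ / (‖x‖ * ‖T x‖) < ‖inner 𝕜 w (T x)‖ / (‖w‖ * ‖T x‖)) :
    re (inner 𝕜 x (T x)) / ‖x‖ ^ 2 < re (inner 𝕜 w (T w)) / ‖w‖ ^ 2 := by
  have hTx : 0 < ‖T x‖ := by
    by_contra! hTx
    simp [norm_le_zero_iff.mp hTx] at h
  simp only [← div_div] at h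
  refine hT.re_inner_div_norm_sq_lt (lt_of_le_of_lt ?_ ((div_lt_div_iff_of_pos_right hTx).mp h))
  gcongr
  exact re_le_norm _

end LinearMap.IsPositive

theorem rayleigh_increases_with_smaller_angle_general
    {n : ℕ} (B : Matrix (Fin n) (Fin n) ℂ) (hB : B.PosDef)
    (x w : EuclideanSpace ℂ (Fin n))
    (hcos : ‖(inner ℂ x (mulVecE B x) : ℂ)‖ / (‖x‖ * ‖mulVecE B x‖) <
            ‖(inner ℂ w (mulVecE B x) : ℂ)‖ / (‖w‖ * ‖mulVecE B x‖)) :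
    RQ B x < RQ B w :=
  -- `mulVecE B` is definitionally `B.toEuclideanLin`
  (Matrix.isPositive_toEuclideanLin_iff.mpr hB.posSemidef).re_inner_div_norm_sq_lt_of_cos_lt hcos

/-- If the angle between `w` and `Bx` is strictly smaller than the angle between `x`
and `Bx` (equivalently, the cosines compare strictly), then `μ(w) > μ(x)`. -/
theorem rayleigh_increases_with_smaller_angle
    {n : ℕ} (B : Matrix (Fin n) (Fin n) ℂ) (hB : B.PosDef)
    (x w : EuclideanSpace ℂ (Fin n)) (hx : x ≠ 0) (hw : w ≠ 0)
    (hcos : ‖(inner ℂ x (mulVecE B x) : ℂ)‖ / (‖x‖ * ‖mulVecE B x‖) <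
            ‖(inner ℂ w (mulVecE B x) : ℂ)‖ / (‖w‖ * ‖mulVecE B x‖)) :
    RQ B x < RQ B w :=
  rayleigh_increases_with_smaller_angle_general B hB x w hcos
end
end

section
/- (Temple's inequality with equality characterization.) Let B be an n×n Hermitian complex matrix and let μ_i > μ_{i+1} be two eigenvalues of B such that no eigenvalue of B lies in the open interval (μ_{i+1}, μ_i). Then for every nonzero x, writing κ = μ(x), one has ‖Bx − κx‖²/‖x‖² ≥ (μ_i − κ)(κ − μ_{i+1}); equivalently, the operator inequality (B − μ_i I)(B − μ_{i+1} I) ≥ 0 holds. Moreover, if μ_{i+1} < κ < μ_i, equality is attained if and only if x lies in the sum of the eigenspaces of B for the eigenvalues μ_i and μ_{i+1}. -/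
/-!
Write `κ` for the Rayleigh quotient of `x` and `P = (B - μ_i)(B - μ_{i+1})`. For any Hermitian `B`
one has the identity `‖Bx - κx‖² = (μ_i - κ)(κ - μ_{i+1})‖x‖² + ⟨x, Px⟩`. The polynomial
`(t - μ_i)(t - μ_{i+1})` is nonnegative on the spectrum of `B` because of the spectral gap, so the
continuous functional calculus makes `P` positive semidefinite; this gives the inequality. Equality
holds iff `⟨x, Px⟩ = 0`, iff `Px = 0` (as `P ≥ 0`), iff `x ∈ ker (B - μ_i) ⊕ ker (B - μ_{i+1})`,
the factors `X - μ_i` and `X - μ_{i+1}` being coprime.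
-/

noncomputable section

def IsEig {n : ℕ} (B : Matrix (Fin n) (Fin n) ℂ) (μ : ℝ) : Prop :=
  ∃ v : Fin n → ℂ, v ≠ 0 ∧ B.mulVec v = (μ : ℂ) • v

open Polynomial in
theorem Module.End.sub_mul_sub_apply_eq_zero_iff {K V : Type*} [Field K] [AddCommGroup V]
    [Module K V] (f : Module.End K V) {a b : K} (hab : a ≠ b) (x : V) :
    ((f - a • 1) * (f - b • 1)) x = 0 ↔ ∃ u v, f u = a • u ∧ f v = b • v ∧ x = u + v := by
  have hker := sup_ker_aeval_eq_ker_aeval_mul_of_coprime f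
    (isCoprime_X_sub_C_of_isUnit_sub (sub_ne_zero.2 hab).isUnit)
  rw [SetLike.ext_iff] at hker
  simpa [Submodule.mem_sup, sub_eq_zero, Algebra.algebraMap_eq_smul_one, eq_comm (a := x)]
    using (hker x).symm

section InnerProductSpace

variable {𝕜 E : Type*} [RCLike 𝕜] [NormedAddCommGroup E] [InnerProductSpace 𝕜 E]

open RCLike

theorem norm_sub_smul_sq_eq_mul_add_re_inner (x y : E) {a b κ : ℝ}
    (hκ : re (inner 𝕜 x y) = κ * ‖x‖ ^ 2) :
    ‖y - (κ : 𝕜) • x‖ ^ 2 =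
      (a - κ) * (κ - b) * ‖x‖ ^ 2 + re (inner 𝕜 (y - (a : 𝕜) • x) (y - (b : 𝕜) • x)) := by
  have hyx : re (inner 𝕜 y x) = κ * ‖x‖ ^ 2 := by rw [← inner_re_symm]; exact hκ
  simp only [@norm_sub_sq 𝕜, inner_sub_left, inner_sub_right, inner_smul_left, inner_smul_right,
    map_sub, norm_smul, inner_self_eq_norm_sq, conj_ofReal, re_ofReal_mul, norm_ofReal, mul_pow,
    sq_abs, hκ, hyx]
  ring

theorem LinearMap.IsSymmetric.norm_apply_sub_smul_sq_eq {T : E →ₗ[𝕜] E} (hT : T.IsSymmetric)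
    (x : E) {a b κ : ℝ} (hκ : re (inner 𝕜 x (T x)) = κ * ‖x‖ ^ 2) :
    ‖T x - (κ : 𝕜) • x‖ ^ 2 =
      (a - κ) * (κ - b) * ‖x‖ ^ 2 + re (inner 𝕜 x (((T - (a : 𝕜) • 1) * (T - (b : 𝕜) • 1)) x)) := by
  rw [norm_sub_smul_sq_eq_mul_add_re_inner x (T x) (a := a) (b := b) hκ]
  simp only [Module.End.mul_apply, LinearMap.sub_apply, LinearMap.smul_apply, Module.End.one_apply,
    map_sub, map_smul, inner_sub_left, inner_sub_right, inner_smul_left, inner_smul_right, hT x,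
    conj_ofReal]

end InnerProductSpace

theorem IsSelfAdjoint.sub_mul_sub_nonneg {A : Type*} [TopologicalSpace A] [Ring A] [StarRing A]
    [PartialOrder A] [StarOrderedRing A] [Algebra ℝ A]
    [ContinuousFunctionalCalculus ℝ A IsSelfAdjoint] {x : A} (hx : IsSelfAdjoint x) {a b : ℝ}
    (hba : b ≤ a) (hgap : ∀ μ ∈ spectrum ℝ x, μ ∉ Set.Ioo b a) :
    0 ≤ (x - algebraMap ℝ A a) * (x - algebraMap ℝ A b) := by
  have hcfc : cfc (fun t : ℝ ↦ (t - a) * (t - b)) x =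
      (x - algebraMap ℝ A a) * (x - algebraMap ℝ A b) := by
    rw [cfc_mul .., cfc_sub .., cfc_sub .., cfc_id' .., cfc_const .., cfc_const ..]
  rw [← hcfc]
  refine cfc_nonneg fun μ hμ ↦ ?_
  have hμ' := hgap μ hμ
  simp only [Set.mem_Ioo, not_and_or, not_lt] at hμ'
  rcases hμ' with h | h <;> nlinarith

theorem isEig_of_mem_spectrum {n : ℕ} {B : Matrix (Fin n) (Fin n) ℂ} {μ : ℝ}
    (hμ : μ ∈ spectrum ℝ B) : IsEig B μ := by
  rw [← spectrum.algebraMap_mem_iff ℂ, ← AlgEquiv.spectrum_eq Matrix.toLinAlgEquiv',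
    ← Module.End.hasEigenvalue_iff_mem_spectrum] at hμ
  obtain ⟨v, hv⟩ := hμ.exists_hasEigenvector
  exact ⟨v, hv.2, by simpa using hv.apply_eq_smul⟩

open scoped ComplexOrder in
theorem Matrix.PosSemidef.re_inner_toEuclideanLin_eq_zero_iff {ι 𝕜 : Type*} [Fintype ι]
    [DecidableEq ι] [RCLike 𝕜] {P : Matrix ι ι 𝕜} (hP : P.PosSemidef) (x : EuclideanSpace 𝕜 ι) :
    RCLike.re (inner 𝕜 x (toEuclideanLin P x)) = 0 ↔ toEuclideanLin P x = 0 := by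
  have hinner : inner 𝕜 x (toEuclideanLin P x) = star x.ofLp ⬝ᵥ P.mulVec x.ofLp := by
    rw [EuclideanSpace.inner_eq_star_dotProduct, dotProduct_comm]; rfl
  have hnonneg := RCLike.nonneg_iff.1 (hP.dotProduct_mulVec_nonneg x.ofLp)
  rw [hinner, ← WithLp.ofLp_eq_zero, Matrix.ofLp_toLpLin, Matrix.toLin'_apply,
    ← hP.dotProduct_mulVec_zero_iff]
  exact ⟨fun h ↦ RCLike.ext (by simpa using h) (by simpa using hnonneg.2), fun h ↦ by simp [h]⟩

open scoped MatrixOrder ComplexOrder in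
theorem temple_inequality_with_equality_general
    {n : ℕ} (B : Matrix (Fin n) (Fin n) ℂ) (hB : B.IsHermitian)
    (μi μi1 : ℝ) (hμ : μi1 < μi)
    (hgap : ∀ μ : ℝ, IsEig B μ → μ ∉ Set.Ioo μi1 μi) :
    (∀ x : EuclideanSpace ℂ (Fin n), x ≠ 0 →
      (μi - RQ B x) * (RQ B x - μi1) ≤
        ‖mulVecE B x - ((RQ B x : ℝ) : ℂ) • x‖ ^ 2 / ‖x‖ ^ 2) ∧
    (∀ z : EuclideanSpace ℂ (Fin n),
      0 ≤ (inner ℂ z (mulVecE ((B - ((μi : ℝ) : ℂ) • 1) * (B - ((μi1 : ℝ) : ℂ) • 1)) z) : ℂ).re) ∧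
    (∀ x : EuclideanSpace ℂ (Fin n), x ≠ 0 → μi1 < RQ B x → RQ B x < μi →
      (‖mulVecE B x - ((RQ B x : ℝ) : ℂ) • x‖ ^ 2 / ‖x‖ ^ 2 =
          (μi - RQ B x) * (RQ B x - μi1) ↔
        ∃ u v : EuclideanSpace ℂ (Fin n),
          mulVecE B u = ((μi : ℝ) : ℂ) • u ∧ mulVecE B v = ((μi1 : ℝ) : ℂ) • v ∧
          x = u + v)) := by
  set T := Matrix.toEuclideanLin B
  set P := (B - ((μi : ℝ) : ℂ) • 1) * (B - ((μi1 : ℝ) : ℂ) • 1)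
  have hT : T.IsSymmetric := Matrix.isSymmetric_toEuclideanLin_iff.2 hB
  have hP : P.PosSemidef := by
    have h := hB.isSelfAdjoint.sub_mul_sub_nonneg hμ.le fun μ hμ' ↦
      hgap μ (isEig_of_mem_spectrum hμ')
    rw [Algebra.algebraMap_eq_smul_one, Algebra.algebraMap_eq_smul_one, ← Complex.coe_smul,
      ← Complex.coe_smul] at h
    exact Matrix.nonneg_iff_posSemidef.1 h
  have hPpos := Matrix.isPositive_toEuclideanLin_iff.2 hP
  have hPT : Matrix.toEuclideanLin P = (T - (μi : ℂ) • 1) * (T - (μi1 : ℂ) • 1) := by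
    change Matrix.toLpLinAlgEquiv 2 P = _
    simp only [P, map_mul, map_sub, map_smul, map_one]
    rfl
  have key : ∀ x ≠ 0, ‖mulVecE B x - ((RQ B x : ℝ) : ℂ) • x‖ ^ 2 / ‖x‖ ^ 2 =
      (μi - RQ B x) * (RQ B x - μi1) +
        RCLike.re (inner ℂ x (Matrix.toEuclideanLin P x)) / ‖x‖ ^ 2 := by
    intro x hx
    have hx2 : ‖x‖ ^ 2 ≠ 0 := by positivity
    have hκ : RCLike.re (inner ℂ x (T x)) = RQ B x * ‖x‖ ^ 2 := (div_mul_cancel₀ _ hx2).symm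
    rw [hPT, ← mul_div_cancel_right₀ ((μi - RQ B x) * (RQ B x - μi1)) hx2, ← add_div]
    exact congrArg (· / ‖x‖ ^ 2) (hT.norm_apply_sub_smul_sq_eq x hκ)
  refine ⟨fun x hx ↦ ?_, hPpos.re_inner_nonneg_right, fun x hx _ _ ↦ ?_⟩
  · rw [key x hx]
    exact le_add_of_nonneg_right (div_nonneg (hPpos.re_inner_nonneg_right x) (sq_nonneg _))
  · rw [key x hx, add_eq_left, div_eq_zero_iff, or_iff_left (by positivity),
      hP.re_inner_toEuclideanLin_eq_zero_iff, hPT,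
      Module.End.sub_mul_sub_apply_eq_zero_iff _ (by exact_mod_cast hμ.ne')]
    rfl

/-- Temple's inequality `‖Bx - κx‖²/‖x‖² ≥ (μ_i - κ)(κ - μ_{i+1})` (with `κ = μ(x)`), the
equivalent operator inequality `(B - μ_i I)(B - μ_{i+1} I) ≥ 0`, and the characterization
of equality: for `μ_{i+1} < κ < μ_i`, equality holds iff `x` lies in the sum of the
eigenspaces of `μ_i` and `μ_{i+1}`. -/
theorem temple_inequality_with_equality
    {n : ℕ} (B : Matrix (Fin n) (Fin n) ℂ) (hB : B.IsHermitian)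
    (μi μi1 : ℝ) (hμ : μi1 < μi)
    (heigi : IsEig B μi) (heigi1 : IsEig B μi1)
    (hgap : ∀ μ : ℝ, IsEig B μ → μ ∉ Set.Ioo μi1 μi) :
    (∀ x : EuclideanSpace ℂ (Fin n), x ≠ 0 →
      (μi - RQ B x) * (RQ B x - μi1) ≤
        ‖mulVecE B x - ((RQ B x : ℝ) : ℂ) • x‖ ^ 2 / ‖x‖ ^ 2) ∧
    (∀ z : EuclideanSpace ℂ (Fin n),
      0 ≤ (inner ℂ z (mulVecE ((B - ((μi : ℝ) : ℂ) • 1) * (B - ((μi1 : ℝ) : ℂ) • 1)) z) : ℂ).re) ∧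
    (∀ x : EuclideanSpace ℂ (Fin n), x ≠ 0 → μi1 < RQ B x → RQ B x < μi →
      (‖mulVecE B x - ((RQ B x : ℝ) : ℂ) • x‖ ^ 2 / ‖x‖ ^ 2 =
          (μi - RQ B x) * (RQ B x - μi1) ↔
        ∃ u v : EuclideanSpace ℂ (Fin n),
          mulVecE B u = ((μi : ℝ) : ℂ) • u ∧ mulVecE B v = ((μi1 : ℝ) : ℂ) • v ∧
          x = u + v)) :=
  temple_inequality_with_equality_general B hB μi μi1 hμ hgap
end
end

section
/- (Integration of inverse functions.) Let b > 0 and let f, g : [0, b] → ℝ be differentiable, strictly increasing functions with strictly positive derivatives, and let a ∈ [0, b] satisfy f(a) = g(b). Suppose that for all α, β ∈ [0, b] with f(α) = g(β) the derivatives satisfy f'(α) ≤ g'(β). Then for every ξ ∈ [0, a] one has f(a − ξ) ≥ g(b − ξ). -/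
/-!
Let `F = f⁻¹` and `G = g⁻¹` on the common range of `f` and `g`. Since `f (F y) = g (G y)`,
the hypothesis gives `(F - G)' = 1 / f' (F y) - 1 / g' (G y) ≥ 0`, so `F - G` is monotone:
whenever `f α = g β ≤ f a = g b` we get `α - β ≤ a - b`. If `f (a - ξ) = g β`, this says
`b - ξ ≤ β`, hence `g (b - ξ) ≤ f (a - ξ)`. Such a `β` exists unless `f (a - ξ) < g 0`,
and that cannot happen: at a crossing `f α = g 0` with `a - ξ ≤ α ≤ a` the same inequality
with `β = 0` forces `α = a - ξ`.
-/

open Set Function Topology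

theorem ContinuousOn.continuousOn_invFunOn {α β : Type*} [TopologicalSpace α] [Nonempty α]
    [TopologicalSpace β] [T2Space β] {f : α → β} {s : Set α} (hs : IsCompact s)
    (hf : ContinuousOn f s) (hinj : InjOn f s) : ContinuousOn (invFunOn f s) (f '' s) := by
  refine continuousOn_iff_isClosed.2 fun C hC => ⟨f '' (s ∩ C), ?_, ?_⟩
  · exact ((hs.inter_right hC).image_of_continuousOn (hf.mono inter_subset_left)).isClosed
  · ext y
    constructor
    · rintro ⟨hy, x, hx, rfl⟩
      rw [mem_preimage, hinj.leftInvOn_invFunOn hx] at hy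
      exact ⟨⟨x, ⟨hx, hy⟩, rfl⟩, x, hx, rfl⟩
    · rintro ⟨⟨x, ⟨hx, hxC⟩, rfl⟩, -⟩
      rw [← hinj.leftInvOn_invFunOn hx] at hxC
      exact ⟨hxC, x, hx, rfl⟩

section StrictMonoOnIcc

variable {f g f' g' : ℝ → ℝ} {p q y : ℝ}

theorem StrictMonoOn.invFunOn_mem_Ioo (hm : StrictMonoOn f (Icc p q)) (hpq : p ≤ q)
    (hc : ContinuousOn f (Icc p q)) (hy : y ∈ Ioo (f p) (f q)) :
    invFunOn f (Icc p q) y ∈ Ioo p q := by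
  have hy' : y ∈ f '' Icc p q := by
    rw [hc.image_Icc_of_monotoneOn hpq hm.monotoneOn]
    exact Ioo_subset_Icc_self hy
  obtain ⟨hx, hfx⟩ := invFunOn_pos hy'
  rw [← hfx] at hy
  exact ⟨(hm.lt_iff_lt (left_mem_Icc.2 hpq) hx).1 hy.1,
    (hm.lt_iff_lt hx (right_mem_Icc.2 hpq)).1 hy.2⟩

theorem StrictMonoOn.hasDerivAt_invFunOn {d : ℝ} (hm : StrictMonoOn f (Icc p q)) (hpq : p ≤ q)
    (hc : ContinuousOn f (Icc p q)) (hy : y ∈ Ioo (f p) (f q))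
    (hf : HasDerivWithinAt f d (Icc p q) (invFunOn f (Icc p q) y)) (hd : d ≠ 0) :
    HasDerivAt (invFunOn f (Icc p q)) d⁻¹ y := by
  have hnhds : f '' Icc p q ∈ 𝓝 y := by
    rw [hc.image_Icc_of_monotoneOn hpq hm.monotoneOn]
    exact Icc_mem_nhds hy.1 hy.2
  have hx := hm.invFunOn_mem_Ioo hpq hc hy
  refine .of_local_left_inverse
    ((hc.continuousOn_invFunOn isCompact_Icc hm.injOn).continuousAt hnhds)
    (hf.hasDerivAt (Icc_mem_nhds hx.1 hx.2)) hd ?_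
  filter_upwards [hnhds] with z hz using invFunOn_eq hz

theorem StrictMonoOn.monotoneOn_invFunOn_sub_invFunOn (hfm : StrictMonoOn f (Icc p q))
    (hgm : StrictMonoOn g (Icc p q)) (hpq : p ≤ q)
    (hf : ∀ x ∈ Icc p q, HasDerivWithinAt f (f' x) (Icc p q) x)
    (hg : ∀ x ∈ Icc p q, HasDerivWithinAt g (g' x) (Icc p q) x)
    (hf' : ∀ x ∈ Icc p q, 0 < f' x)
    (hcomp : ∀ α ∈ Icc p q, ∀ β ∈ Icc p q, f α = g β → f' α ≤ g' β) :
    MonotoneOn (fun y => invFunOn f (Icc p q) y - invFunOn g (Icc p q) y)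
      (Icc (max (f p) (g p)) (min (f q) (g q))) := by
  set F := invFunOn f (Icc p q)
  set G := invFunOn g (Icc p q)
  have hfc : ContinuousOn f (Icc p q) := fun x hx => (hf x hx).continuousWithinAt
  have hgc : ContinuousOn g (Icc p q) := fun x hx => (hg x hx).continuousWithinAt
  have hrange_f : Icc (max (f p) (g p)) (min (f q) (g q)) ⊆ f '' Icc p q := by
    rw [hfc.image_Icc_of_monotoneOn hpq hfm.monotoneOn]
    exact Icc_subset_Icc (le_max_left _ _) (min_le_left _ _)
  have hrange_g : Icc (max (f p) (g p)) (min (f q) (g q)) ⊆ g '' Icc p q := by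
    rw [hgc.image_Icc_of_monotoneOn hpq hgm.monotoneOn]
    exact Icc_subset_Icc (le_max_right _ _) (min_le_right _ _)
  have hslopes : ∀ y ∈ Ioo (max (f p) (g p)) (min (f q) (g q)),
      0 < f' (F y) ∧ f' (F y) ≤ g' (G y) := fun y hy =>
    have hfy := hrange_f (Ioo_subset_Icc_self hy)
    have hgy := hrange_g (Ioo_subset_Icc_self hy)
    ⟨hf' _ (invFunOn_mem hfy), hcomp _ (invFunOn_mem hfy) _ (invFunOn_mem hgy)
      ((invFunOn_eq hfy).trans (invFunOn_eq hgy).symm)⟩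
  have hderiv : ∀ y ∈ Ioo (max (f p) (g p)) (min (f q) (g q)),
      HasDerivAt (fun y => F y - G y) ((f' (F y))⁻¹ - (g' (G y))⁻¹) y := by
    intro y hy
    obtain ⟨hpos, hle⟩ := hslopes y hy
    obtain ⟨hfp, hgp⟩ := max_lt_iff.1 hy.1
    obtain ⟨hfq, hgq⟩ := lt_min_iff.1 hy.2
    exact (hfm.hasDerivAt_invFunOn hpq hfc ⟨hfp, hfq⟩
        (hf _ (invFunOn_mem (hrange_f (Ioo_subset_Icc_self hy)))) hpos.ne').sub
      (hgm.hasDerivAt_invFunOn hpq hgc ⟨hgp, hgq⟩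
        (hg _ (invFunOn_mem (hrange_g (Ioo_subset_Icc_self hy)))) (hpos.trans_le hle).ne')
  refine monotoneOn_of_hasDerivWithinAt_nonneg (f' := fun y => (f' (F y))⁻¹ - (g' (G y))⁻¹)
    (convex_Icc _ _)
    (((hfc.continuousOn_invFunOn isCompact_Icc hfm.injOn).mono hrange_f).sub
      ((hgc.continuousOn_invFunOn isCompact_Icc hgm.injOn).mono hrange_g)) (fun y hy => ?_)
    (fun y hy => ?_) <;> rw [interior_Icc] at hy
  · exact (hderiv y hy).hasDerivWithinAt
  · exact sub_nonneg.2 (inv_anti₀ (hslopes y hy).1 (hslopes y hy).2)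

theorem StrictMonoOn.sub_le_sub_of_apply_eq_apply (hfm : StrictMonoOn f (Icc p q))
    (hgm : StrictMonoOn g (Icc p q)) (hpq : p ≤ q)
    (hf : ∀ x ∈ Icc p q, HasDerivWithinAt f (f' x) (Icc p q) x)
    (hg : ∀ x ∈ Icc p q, HasDerivWithinAt g (g' x) (Icc p q) x)
    (hf' : ∀ x ∈ Icc p q, 0 < f' x)
    (hcomp : ∀ α ∈ Icc p q, ∀ β ∈ Icc p q, f α = g β → f' α ≤ g' β)
    {α β α' β' : ℝ} (hα : α ∈ Icc p q) (hβ : β ∈ Icc p q) (hα' : α' ∈ Icc p q)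
    (hβ' : β' ∈ Icc p q) (h : f α = g β) (h' : f α' = g β') (hle : α ≤ α') :
    α - β ≤ α' - β' := by
  have hp := left_mem_Icc.2 hpq
  have hq := right_mem_Icc.2 hpq
  have hmem : ∀ {α β}, α ∈ Icc p q → β ∈ Icc p q → f α = g β →
      f α ∈ Icc (max (f p) (g p)) (min (f q) (g q)) := fun hα hβ h =>
    ⟨max_le (hfm.monotoneOn hp hα hα.1) (h ▸ hgm.monotoneOn hp hβ hβ.1),
      le_min (hfm.monotoneOn hα hq hα.2) (h ▸ hgm.monotoneOn hβ hq hβ.2)⟩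
  have hinv : ∀ {α β}, α ∈ Icc p q → β ∈ Icc p q → f α = g β →
      invFunOn f (Icc p q) (f α) - invFunOn g (Icc p q) (f α) = α - β := fun hα hβ h => by
    rw [hfm.injOn.leftInvOn_invFunOn hα, h, hgm.injOn.leftInvOn_invFunOn hβ]
  have := hfm.monotoneOn_invFunOn_sub_invFunOn hgm hpq hf hg hf' hcomp (hmem hα hβ h)
    (hmem hα' hβ' h') (hfm.monotoneOn hα hα' hle)
  simpa only [hinv hα hβ h, hinv hα' hβ' h'] using this

end StrictMonoOnIcc

theorem integration_of_inverse_functions_general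
    (b : ℝ) (f g f' g' : ℝ → ℝ)
    (hf : ∀ t ∈ Set.Icc (0 : ℝ) b, HasDerivWithinAt f (f' t) (Set.Icc (0 : ℝ) b) t)
    (hg : ∀ t ∈ Set.Icc (0 : ℝ) b, HasDerivWithinAt g (g' t) (Set.Icc (0 : ℝ) b) t)
    (hfmono : StrictMonoOn f (Set.Icc (0 : ℝ) b))
    (hgmono : StrictMonoOn g (Set.Icc (0 : ℝ) b))
    (hf' : ∀ t ∈ Set.Icc (0 : ℝ) b, 0 < f' t)
    (a : ℝ) (ha : a ∈ Set.Icc (0 : ℝ) b) (hab : f a = g b)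
    (hcomp : ∀ α ∈ Set.Icc (0 : ℝ) b, ∀ β ∈ Set.Icc (0 : ℝ) b,
      f α = g β → f' α ≤ g' β) :
    ∀ ξ ∈ Set.Icc (0 : ℝ) a, g (b - ξ) ≤ f (a - ξ) := by
  have hb0 : 0 ≤ b := ha.1.trans ha.2
  have h0 := left_mem_Icc.2 hb0
  have hb := right_mem_Icc.2 hb0
  have hfc : ContinuousOn f (Icc 0 b) := fun x hx => (hf x hx).continuousWithinAt
  have hlevel : ∀ α ∈ Icc 0 b, ∀ β ∈ Icc 0 b, f α = g β → α ≤ a →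
      b - β ≤ a - α := fun α hα β hβ h hle => by
    linarith [hfmono.sub_le_sub_of_apply_eq_apply hgmono hb0 hf hg hf' hcomp hα hβ ha hb h
      hab hle]
  intro ξ hξ
  have haξ : a - ξ ∈ Icc 0 b := ⟨by linarith [hξ.2], by linarith [hξ.1, ha.2]⟩
  have hbξ : b - ξ ∈ Icc 0 b := ⟨by linarith [hξ.2, ha.2], by linarith [hξ.1]⟩
  have hfa : f (a - ξ) ≤ f a := hfmono.monotoneOn haξ ha (by linarith [hξ.1])
  have hg0 : g 0 ≤ f (a - ξ) := by
    by_contra! hlt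
    obtain ⟨α, hα, hfα⟩ := intermediate_value_Icc (by linarith [hξ.1] : a - ξ ≤ a)
      (hfc.mono (Icc_subset_Icc haξ.1 ha.2)) ⟨hlt.le, hab ▸ hgmono.monotoneOn h0 hb hb0⟩
    have hαb : α ∈ Icc 0 b := ⟨haξ.1.trans hα.1, hα.2.trans ha.2⟩
    have : α = a - ξ := by linarith [hlevel α hαb 0 h0 hfα hα.2, hα.1, hξ.2, ha.2]
    exact hlt.ne (this ▸ hfα)
  obtain ⟨β, hβ, hgβ⟩ := intermediate_value_Icc hb0
    (fun x hx => (hg x hx).continuousWithinAt) ⟨hg0, hab ▸ hfa⟩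
  have hβξ : b - ξ ≤ β := by linarith [hlevel _ haξ β hβ hgβ.symm (by linarith [hξ.1])]
  calc g (b - ξ) ≤ g β := hgmono.monotoneOn hbξ hβ hβξ
    _ = f (a - ξ) := hgβ

/-- Integration of inverse functions (Theorem A.1): if `f, g` are strictly increasing
with positive derivatives on `[0,b]`, `f(a) = g(b)`, and `f'(α) ≤ g'(β)` whenever
`f(α) = g(β)`, then `f(a - ξ) ≥ g(b - ξ)` for all `ξ ∈ [0,a]`. -/
theorem integration_of_inverse_functions
    (b : ℝ) (hb : 0 < b) (f g f' g' : ℝ → ℝ)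
    (hf : ∀ t ∈ Set.Icc (0 : ℝ) b, HasDerivWithinAt f (f' t) (Set.Icc (0 : ℝ) b) t)
    (hg : ∀ t ∈ Set.Icc (0 : ℝ) b, HasDerivWithinAt g (g' t) (Set.Icc (0 : ℝ) b) t)
    (hfmono : StrictMonoOn f (Set.Icc (0 : ℝ) b))
    (hgmono : StrictMonoOn g (Set.Icc (0 : ℝ) b))
    (hf' : ∀ t ∈ Set.Icc (0 : ℝ) b, 0 < f' t)
    (hg' : ∀ t ∈ Set.Icc (0 : ℝ) b, 0 < g' t)
    (a : ℝ) (ha : a ∈ Set.Icc (0 : ℝ) b) (hab : f a = g b)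
    (hcomp : ∀ α ∈ Set.Icc (0 : ℝ) b, ∀ β ∈ Set.Icc (0 : ℝ) b,
      f α = g β → f' α ≤ g' β) :
    ∀ ξ ∈ Set.Icc (0 : ℝ) a, g (b - ξ) ≤ f (a - ξ) :=
  integration_of_inverse_functions_general b f g f' g' hf hg hfmono hgmono hf' a ha hab hcomp
end

section
/- Let B be an n×n Hermitian positive definite complex matrix and let x_i, x_{i+1} be orthonormal eigenvectors of B with eigenvalues μ_i > μ_{i+1} > 0. Let x = c_i x_i + c_{i+1} x_{i+1} with c_i ≠ 0 and c_{i+1} ≠ 0, let α > 0, and set w = (B + αI)⁻¹ B x. Then μ_{i+1} < μ(w) < μ_i, μ_{i+1} < μ(x) < μ_i, and the convergence-factor identity holds: [(μ_i − μ(w))/(μ(w) − μ_{i+1})] · [(μ(x) − μ_{i+1})/(μ_i − μ(x))] = ( μ_{i+1}(μ_i + α) / (μ_i(μ_{i+1} + α)) )². -/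
open scoped ComplexOrder

noncomputable section

/-! In an orthonormal pair of eigenvectors, the Rayleigh quotient of `a • xᵢ + b • xᵢ₊₁` is
the mean of `μᵢ` and `μᵢ₊₁` weighted by `|a|²` and `|b|²`, so
`(μᵢ - μ) / (μ - μᵢ₊₁) = |b|² / |a|²`. Since `(B + αI)⁻¹ B` multiplies the coefficient of an
eigenvector of eigenvalue `μ` by `μ / (μ + α)`, passing from `x` to `w` multiplies this ratio by
the square of `(μᵢ₊₁ / (μᵢ₊₁ + α)) / (μᵢ / (μᵢ + α))`. -/

section WeightedMean

variable {p q T S : ℝ}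

lemma sub_weightedMean (h : T + S ≠ 0) :
    p - (p * T + q * S) / (T + S) = (p - q) * S / (T + S) := by
  field_simp; ring

lemma weightedMean_sub (h : T + S ≠ 0) :
    (p * T + q * S) / (T + S) - q = (p - q) * T / (T + S) := by
  field_simp; ring

lemma weightedMean_mem_Ioo (hqp : q < p) (hT : 0 < T) (hS : 0 < S) :
    (p * T + q * S) / (T + S) ∈ Set.Ioo q p := by
  have hTS : T + S ≠ 0 := by positivity
  have hgap := sub_pos.2 hqp
  have hlo : 0 < (p - q) * T / (T + S) := by positivity
  have hhi : 0 < (p - q) * S / (T + S) := by positivity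
  constructor
  · linarith [weightedMean_sub (p := p) (q := q) hTS]
  · linarith [sub_weightedMean (p := p) (q := q) hTS]

lemma sub_weightedMean_div_weightedMean_sub (hqp : q ≠ p) (hT : T ≠ 0) (hTS : T + S ≠ 0) :
    (p - (p * T + q * S) / (T + S)) / ((p * T + q * S) / (T + S) - q) = S / T := by
  rw [sub_weightedMean hTS, weightedMean_sub hTS]
  have : p - q ≠ 0 := sub_ne_zero.2 hqp.symm
  field_simp

lemma weightedMean_rescaled_ratio (hqp : q < p) (hT : 0 < T) (hS : 0 < S) {r s : ℝ}
    (hr : r ≠ 0) (hs : s ≠ 0) :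
    (p - (p * (r ^ 2 * T) + q * (s ^ 2 * S)) / (r ^ 2 * T + s ^ 2 * S)) /
        ((p * (r ^ 2 * T) + q * (s ^ 2 * S)) / (r ^ 2 * T + s ^ 2 * S) - q) *
      (((p * T + q * S) / (T + S) - q) / (p - (p * T + q * S) / (T + S))) = (s / r) ^ 2 := by
  rw [← inv_div (p - _), sub_weightedMean_div_weightedMean_sub hqp.ne (by positivity)
    (by positivity), sub_weightedMean_div_weightedMean_sub hqp.ne hT.ne' (by positivity)]
  field_simp

end WeightedMean

section MulVecE

variable {n : ℕ}

lemma mulVecE_add (M : Matrix (Fin n) (Fin n) ℂ) (u v : EuclideanSpace ℂ (Fin n)) :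
    mulVecE M (u + v) = mulVecE M u + mulVecE M v := by
  simp [mulVecE, Matrix.mulVec_add]

lemma mulVecE_smul (M : Matrix (Fin n) (Fin n) ℂ) (a : ℂ) (u : EuclideanSpace ℂ (Fin n)) :
    mulVecE M (a • u) = a • mulVecE M u := by
  simp [mulVecE, Matrix.mulVec_smul]

lemma mulVecE_mulVecE (M N : Matrix (Fin n) (Fin n) ℂ) (u : EuclideanSpace ℂ (Fin n)) :
    mulVecE M (mulVecE N u) = mulVecE (M * N) u := by
  simp [mulVecE, Matrix.mulVec_mulVec]

lemma mulVecE_add_smul_one_of_eigen {B : Matrix (Fin n) (Fin n) ℂ}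
    {u : EuclideanSpace ℂ (Fin n)} {μ : ℂ} (hu : mulVecE B u = μ • u) (c : ℂ) :
    mulVecE (B + c • 1) u = (μ + c) • u := by
  rw [add_smul, ← hu]
  simp [mulVecE, Matrix.add_mulVec, Matrix.smul_mulVec]

lemma mulVecE_inv_of_eigen {A : Matrix (Fin n) (Fin n) ℂ} (hA : IsUnit A)
    {u : EuclideanSpace ℂ (Fin n)} {c : ℂ} (hc : c ≠ 0) (hu : mulVecE A u = c • u) :
    mulVecE A⁻¹ u = c⁻¹ • u := by
  have hinv : mulVecE A⁻¹ (mulVecE A u) = u := by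
    rw [mulVecE_mulVecE, Matrix.nonsing_inv_mul A ((Matrix.isUnit_iff_isUnit_det A).mp hA)]
    simp [mulVecE]
  rw [hu, mulVecE_smul] at hinv
  calc mulVecE A⁻¹ u = c⁻¹ • c • mulVecE A⁻¹ u := by
        rw [smul_smul, inv_mul_cancel₀ hc, one_smul]
    _ = c⁻¹ • u := by rw [hinv]

lemma mulVecE_shiftedInv_mul_of_eigen {B : Matrix (Fin n) (Fin n) ℂ} {c : ℂ}
    (hA : IsUnit (B + c • 1)) {u : EuclideanSpace ℂ (Fin n)} {μ : ℂ}
    (hu : mulVecE B u = μ • u) (hμc : μ + c ≠ 0) :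
    mulVecE (B + c • 1)⁻¹ (mulVecE B u) = (μ / (μ + c)) • u := by
  rw [hu, mulVecE_smul, mulVecE_inv_of_eigen hA hμc (mulVecE_add_smul_one_of_eigen hu c),
    smul_smul, div_eq_mul_inv]

end MulVecE

section RayleighQuotient

variable {n : ℕ} {B : Matrix (Fin n) (Fin n) ℂ} {u v : EuclideanSpace ℂ (Fin n)}
  {p q : ℝ}

lemma RQ_smul_add_smul (hu : ‖u‖ = 1) (hv : ‖v‖ = 1) (huv : inner ℂ u v = 0)
    (hBu : mulVecE B u = (p : ℂ) • u) (hBv : mulVecE B v = (q : ℂ) • v) (a b : ℂ) :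
    RQ B (a • u + b • v) =
      (p * ‖a‖ ^ 2 + q * ‖b‖ ^ 2) / (‖a‖ ^ 2 + ‖b‖ ^ 2) := by
  have hvu : inner ℂ v u = 0 := by rw [← inner_conj_symm, huv, map_zero]
  have huu : inner ℂ u u = (1 : ℂ) := by rw [inner_self_eq_norm_sq_to_K, hu]; norm_num
  have hvv : inner ℂ v v = (1 : ℂ) := by rw [inner_self_eq_norm_sq_to_K, hv]; norm_num
  have hinner : ∀ c d : ℂ, inner ℂ (a • u + b • v) (c • u + d • v)
      = (starRingEnd ℂ) a * c + (starRingEnd ℂ) b * d := by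
    intro c d
    simp only [inner_add_left, inner_add_right, inner_smul_left, inner_smul_right,
      huv, hvu, huu, hvv]
    ring
  have hnum : inner ℂ (a • u + b • v) (mulVecE B (a • u + b • v))
      = ((p * ‖a‖ ^ 2 + q * ‖b‖ ^ 2 : ℝ) : ℂ) := by
    rw [mulVecE_add, mulVecE_smul, mulVecE_smul, hBu, hBv, smul_smul, smul_smul, hinner,
      ← mul_assoc, ← mul_assoc, Complex.conj_mul', Complex.conj_mul']
    push_cast; ring
  have hden : ‖a • u + b • v‖ ^ 2 = ‖a‖ ^ 2 + ‖b‖ ^ 2 := by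
    have := inner_self_eq_norm_sq_to_K (𝕜 := ℂ) (a • u + b • v)
    rw [hinner, Complex.conj_mul', Complex.conj_mul'] at this
    apply Complex.ofReal_injective
    simpa using this.symm
  rw [RQ, hnum, hden, Complex.ofReal_re]

end RayleighQuotient

/-- The convergence-factor identity for `w = (B + αI)⁻¹ B x` with
`x = c_i x_i + c_{i+1} x_{i+1}` and `α > 0`. -/
theorem convergence_factor_identity
    {n : ℕ} (B : Matrix (Fin n) (Fin n) ℂ) (hB : B.PosDef)
    (xi xi1 : EuclideanSpace ℂ (Fin n))
    (hxi : ‖xi‖ = 1) (hxi1 : ‖xi1‖ = 1) (horth : (inner ℂ xi xi1 : ℂ) = 0)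
    (μi μi1 : ℝ) (hμ : μi1 < μi) (hμpos : 0 < μi1)
    (heigi : mulVecE B xi = ((μi : ℝ) : ℂ) • xi)
    (heigi1 : mulVecE B xi1 = ((μi1 : ℝ) : ℂ) • xi1)
    (ci ci1 : ℂ) (hci : ci ≠ 0) (hci1 : ci1 ≠ 0)
    (x : EuclideanSpace ℂ (Fin n)) (hx : x = ci • xi + ci1 • xi1)
    (α : ℝ) (hα : 0 < α)
    (w : EuclideanSpace ℂ (Fin n))
    (hw : w = mulVecE (B + ((α : ℝ) : ℂ) • (1 : Matrix (Fin n) (Fin n) ℂ))⁻¹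
      (mulVecE B x)) :
    μi1 < RQ B w ∧ RQ B w < μi ∧ μi1 < RQ B x ∧ RQ B x < μi ∧
      ((μi - RQ B w) / (RQ B w - μi1)) * ((RQ B x - μi1) / (μi - RQ B x)) =
        (μi1 * (μi + α) / (μi * (μi1 + α))) ^ 2 := by
  have hμi : 0 < μi := hμpos.trans hμ
  have hA : IsUnit (B + ((α : ℝ) : ℂ) • (1 : Matrix (Fin n) (Fin n) ℂ)) :=
    (hB.add_posSemidef (Matrix.PosSemidef.one.smul (by exact_mod_cast hα.le))).isUnit
  have hshift : ∀ μ : ℝ, 0 < μ → (μ : ℂ) + α ≠ 0 := fun μ hμ => by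
    exact_mod_cast (add_pos hμ hα).ne'
  have hw' : w = (ci * ((μi / (μi + α) : ℝ) : ℂ)) • xi
      + (ci1 * ((μi1 / (μi1 + α) : ℝ) : ℂ)) • xi1 := by
    rw [hw, hx, mulVecE_add, mulVecE_add, mulVecE_smul, mulVecE_smul, mulVecE_smul, mulVecE_smul,
      mulVecE_shiftedInv_mul_of_eigen hA heigi (hshift μi hμi),
      mulVecE_shiftedInv_mul_of_eigen hA heigi1 (hshift μi1 hμpos), smul_smul, smul_smul]
    push_cast; rfl
  have hT : 0 < ‖ci‖ ^ 2 := by positivity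
  have hS : 0 < ‖ci1‖ ^ 2 := by positivity
  rw [hw', hx, RQ_smul_add_smul hxi hxi1 horth heigi heigi1,
    RQ_smul_add_smul hxi hxi1 horth heigi heigi1]
  simp only [norm_mul, mul_pow, Complex.norm_real, Real.norm_eq_abs, sq_abs]
  have hpos : 0 < μi / (μi + α) := by positivity
  have hpos1 : 0 < μi1 / (μi1 + α) := by positivity
  rw [mul_comm (‖ci‖ ^ 2), mul_comm (‖ci1‖ ^ 2)]
  have hw_mem :=
    weightedMean_mem_Ioo hμ (mul_pos (pow_pos hpos 2) hT) (mul_pos (pow_pos hpos1 2) hS)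
  have hx_mem := weightedMean_mem_Ioo hμ hT hS
  refine ⟨hw_mem.1, hw_mem.2, hx_mem.1, hx_mem.2, ?_⟩
  rw [weightedMean_rescaled_ratio hμ hT hS hpos.ne' hpos1.ne']
  field_simp
end
end

section
/- Let 0 < μ_{i+1} < μ_i be real numbers and γ ∈ (0,1). For κ ∈ (μ_{i+1}, μ_i), consider the quadratic equation a(κ)α² + b(κ)α + c = 0 where a(κ) = γ²(κ(μ_i + μ_{i+1}) − μ_i μ_{i+1}), b(κ) = 2γ²κ μ_i μ_{i+1}, and c = −(1 − γ²)μ_i² μ_{i+1}². Then a(κ) > 0, b(κ) > 0, c < 0, the quadratic has exactly one positive root α(κ) and one negative root, the function κ ↦ α(κ) is strictly decreasing on (μ_{i+1}, μ_i), and α(κ) → μ_{i+1}(1 − γ)/γ as κ → μ_i from below. -/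
/-!
With `a > 0` and `c < 0` the discriminant exceeds `b²`, so the quadratic has one root of each
sign, and `a x² + b x + c = a (x - α₊)(x - α₋)` shows that for `x > 0` the value of the
quadratic has the sign of `x - α₊`. Increasing `a` and `b` makes the quadratic positive at the
old root `α₊ > 0`, so the new positive root is smaller. At `κ = μ_i` the discriminant is the
perfect square `(2γμ_i²μ_{i+1})²`, and the limit is the value of the continuous root formula there.
-/

namespace Quadratic

noncomputable def posRoot (a b c : ℝ) : ℝ := (-b + √(discrim a b c)) / (2 * a)

noncomputable def negRoot (a b c : ℝ) : ℝ := (-b - √(discrim a b c)) / (2 * a)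

section

variable {a b c : ℝ}

theorem eq_mul_sub_posRoot_mul_sub_negRoot (ha : a ≠ 0) (hD : 0 ≤ discrim a b c) (x : ℝ) :
    a * x ^ 2 + b * x + c = a * (x - posRoot a b c) * (x - negRoot a b c) := by
  have hs : √(discrim a b c) ^ 2 = b ^ 2 - 4 * a * c := by rw [Real.sq_sqrt hD, discrim]
  unfold posRoot negRoot
  field_simp
  linear_combination hs

theorem discrim_nonneg (ha : 0 < a) (hc : c < 0) : 0 ≤ discrim a b c := by
  rw [discrim]
  nlinarith [sq_nonneg b]

theorem abs_lt_sqrt_discrim (ha : 0 < a) (hc : c < 0) : |b| < √(discrim a b c) := by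
  rw [Real.lt_sqrt (abs_nonneg b), sq_abs, discrim]
  nlinarith

theorem posRoot_pos (ha : 0 < a) (hc : c < 0) : 0 < posRoot a b c := by
  have := (abs_lt_sqrt_discrim (b := b) ha hc).trans_le' (le_abs_self b)
  exact div_pos (by linarith) (by positivity)

theorem negRoot_neg (ha : 0 < a) (hc : c < 0) : negRoot a b c < 0 := by
  have := (abs_lt_sqrt_discrim (b := b) ha hc).trans_le' (neg_le_abs b)
  exact div_neg_of_neg_of_pos (by linarith) (by positivity)

theorem eval_eq_zero_iff (ha : 0 < a) (hc : c < 0) (x : ℝ) :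
    a * x ^ 2 + b * x + c = 0 ↔ x = posRoot a b c ∨ x = negRoot a b c := by
  rw [eq_mul_sub_posRoot_mul_sub_negRoot ha.ne' (discrim_nonneg ha hc), mul_assoc,
    mul_eq_zero, mul_eq_zero, sub_eq_zero, sub_eq_zero]
  simp [ha.ne']

theorem eval_posRoot (ha : 0 < a) (hc : c < 0) :
    a * posRoot a b c ^ 2 + b * posRoot a b c + c = 0 :=
  (eval_eq_zero_iff ha hc _).2 (.inl rfl)

theorem eval_negRoot (ha : 0 < a) (hc : c < 0) :
    a * negRoot a b c ^ 2 + b * negRoot a b c + c = 0 :=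
  (eval_eq_zero_iff ha hc _).2 (.inr rfl)

theorem posRoot_lt_of_eval_pos (ha : 0 < a) (hc : c < 0) {x : ℝ} (hx : 0 < x)
    (hpos : 0 < a * x ^ 2 + b * x + c) : posRoot a b c < x := by
  rw [eq_mul_sub_posRoot_mul_sub_negRoot ha.ne' (discrim_nonneg ha hc), mul_right_comm] at hpos
  have hxn : 0 < x - negRoot a b c := by linarith [negRoot_neg (b := b) ha hc]
  exact sub_pos.1 (pos_of_mul_pos_right hpos (mul_pos ha hxn).le)

theorem posRoot_lt_posRoot {a' b' : ℝ} (ha : 0 < a) (hc : c < 0) (haa' : a < a')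
    (hbb' : b ≤ b') : posRoot a' b' c < posRoot a b c := by
  have hx := posRoot_pos (b := b) ha hc
  apply posRoot_lt_of_eval_pos (ha.trans haa') hc hx
  have : a * posRoot a b c ^ 2 < a' * posRoot a b c ^ 2 := by gcongr
  have : b * posRoot a b c ≤ b' * posRoot a b c := by gcongr
  linarith [eval_posRoot (b := b) ha hc]

theorem posRoot_of_discrim_eq_sq {s : ℝ} (hs : 0 ≤ s) (h : discrim a b c = s ^ 2) :
    posRoot a b c = (-b + s) / (2 * a) := by
  rw [posRoot, h, Real.sqrt_sq hs]

end

theorem _root_.ContinuousAt.posRoot {X : Type*} [TopologicalSpace X] {f g : X → ℝ} {x : X}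
    (hf : ContinuousAt f x) (hg : ContinuousAt g x) (hfx : f x ≠ 0) (c : ℝ) :
    ContinuousAt (fun y => posRoot (f y) (g y) c) x := by
  simp only [Quadratic.posRoot, discrim]
  exact (hg.neg.add (by fun_prop)).div (continuousAt_const.mul hf)
    (mul_ne_zero two_ne_zero hfx)

end Quadratic

open Quadratic

/-- For `κ ∈ (μ_{i+1}, μ_i)`, the quadratic `a(κ)α² + b(κ)α + c = 0` with
`a(κ) = γ²(κ(μ_i + μ_{i+1}) - μ_i μ_{i+1})`, `b(κ) = 2γ²κμ_iμ_{i+1}`,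
`c = -(1-γ²)μ_i²μ_{i+1}²` has positive leading and linear coefficients and negative
constant term, exactly one positive and one negative root; its positive root `α(κ)` is
strictly decreasing in `κ` and tends to `μ_{i+1}(1-γ)/γ` as `κ → μ_i` from below. -/
theorem positive_root_of_quadratic
    (μi μi1 γ : ℝ) (h0 : 0 < μi1) (h1 : μi1 < μi) (hγ0 : 0 < γ) (hγ1 : γ < 1) :
    ∃ αf : ℝ → ℝ,
      (∀ κ ∈ Set.Ioo μi1 μi,
        0 < γ ^ 2 * (κ * (μi + μi1) - μi * μi1) ∧
        0 < 2 * γ ^ 2 * κ * μi * μi1 ∧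
        (-(1 - γ ^ 2) * μi ^ 2 * μi1 ^ 2 : ℝ) < 0 ∧
        0 < αf κ ∧
        γ ^ 2 * (κ * (μi + μi1) - μi * μi1) * (αf κ) ^ 2 +
          2 * γ ^ 2 * κ * μi * μi1 * αf κ + (-(1 - γ ^ 2) * μi ^ 2 * μi1 ^ 2) = 0 ∧
        ∃ αneg : ℝ, αneg < 0 ∧
          γ ^ 2 * (κ * (μi + μi1) - μi * μi1) * αneg ^ 2 +
            2 * γ ^ 2 * κ * μi * μi1 * αneg + (-(1 - γ ^ 2) * μi ^ 2 * μi1 ^ 2) = 0 ∧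
          ∀ β : ℝ,
            γ ^ 2 * (κ * (μi + μi1) - μi * μi1) * β ^ 2 +
              2 * γ ^ 2 * κ * μi * μi1 * β + (-(1 - γ ^ 2) * μi ^ 2 * μi1 ^ 2) = 0 →
            β = αf κ ∨ β = αneg) ∧
      StrictAntiOn αf (Set.Ioo μi1 μi) ∧
      Filter.Tendsto αf (nhdsWithin μi (Set.Ioo μi1 μi))
        (nhds (μi1 * (1 - γ) / γ)) := by
  have hμi : 0 < μi := h0.trans h1
  have hc : (-(1 - γ ^ 2) * μi ^ 2 * μi1 ^ 2 : ℝ) < 0 := by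
    have : 0 < 1 - γ ^ 2 := by nlinarith
    have : 0 < (1 - γ ^ 2) * μi ^ 2 * μi1 ^ 2 := by positivity
    linarith
  have ha : ∀ κ, μi1 < κ → 0 < γ ^ 2 * (κ * (μi + μi1) - μi * μi1) := fun κ hκ => by
    have : μi1 * (μi + μi1) < κ * (μi + μi1) := by gcongr
    have : 0 < κ * (μi + μi1) - μi * μi1 := by nlinarith
    positivity
  have hb : ∀ κ, μi1 < κ → 0 < 2 * γ ^ 2 * κ * μi * μi1 := fun κ hκ => by
    have := h0.trans hκ
    positivity
  refine ⟨fun κ => posRoot (γ ^ 2 * (κ * (μi + μi1) - μi * μi1)) (2 * γ ^ 2 * κ * μi * μi1)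
      (-(1 - γ ^ 2) * μi ^ 2 * μi1 ^ 2), fun κ hκ => ?_, ?_, ?_⟩
  · have haκ := ha κ hκ.1
    exact ⟨haκ, hb κ hκ.1, hc, posRoot_pos haκ hc, eval_posRoot haκ hc, _, negRoot_neg haκ hc,
      eval_negRoot haκ hc, fun β => (eval_eq_zero_iff haκ hc β).1⟩
  · intro x hx y _ hxy
    have : 0 < μi + μi1 := by linarith
    exact posRoot_lt_posRoot (ha x hx.1) hc (by gcongr) (by gcongr)
  · have hD : discrim (γ ^ 2 * (μi * (μi + μi1) - μi * μi1)) (2 * γ ^ 2 * μi * μi * μi1)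
        (-(1 - γ ^ 2) * μi ^ 2 * μi1 ^ 2) = (2 * γ * μi ^ 2 * μi1) ^ 2 := by
      rw [discrim]; ring
    have hlim : posRoot (γ ^ 2 * (μi * (μi + μi1) - μi * μi1)) (2 * γ ^ 2 * μi * μi * μi1)
        (-(1 - γ ^ 2) * μi ^ 2 * μi1 ^ 2) = μi1 * (1 - γ) / γ := by
      rw [posRoot_of_discrim_eq_sq (by positivity) hD]
      field_simp [hμi.ne']
      ring
    rw [← hlim]
    apply ContinuousAt.continuousWithinAt
    refine ContinuousAt.posRoot ?_ ?_ ?_ _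
    · fun_prop
    · fun_prop
    · exact (ha μi h1).ne'
end
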